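/- Deterministic form of the joint sensing–inference sample complexity theorem: let M ∈ ℕ, let I : Fin M → ℝ be antitone, let c > 0 and 0 < ε ≤ c. For each round r ∈ ℕ set the confidence width w_r = c·2^{−r/2}, and suppose the round-r estimates Î_r : Fin M → ℝ satisfy |Î_r m − I m| ≤ w_r for every m. Define the survivor set S_r = {m : Î_r m ≥ ε + w_r}. Then for R = ⌈2·log₂(c/ε)⌉ all of the following hold: (i) w_R ≤ ε; (ii) {m : I m ≥ 3ε} ⊆ S_R ⊆ {m : I m ≥ ε}, and hence card S_R ≤ k*(ε); (iii) the per-modality sample budget over all rounds satisfies ∑_{r=0}^{R} 2^r ≤ 4·c²/ε². Consequently, ε-accurate identification of the relevant modalities is achieved in O(log(c/ε)) rounds while only modalities with gain at least ε can survive. -/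
import Mathlib

/-- Deterministic form of the joint sensing–inference sample complexity theorem.
With confidence widths `w r = c·2^{−r/2}`, round-`r` estimates uniformly within
`w r` of the true gains, survivor sets `S r = {m | Î_r m ≥ ε + w r}`, and
`R = ⌈2·log₂(c/ε)⌉`, we have:
(i) `w R ≤ ε`;
(ii) `{m | I m ≥ 3ε} ⊆ S R ⊆ {m | I m ≥ ε}`, hence `card (S R) ≤ k*(ε)`;
(iii) `∑_{r=0}^{R} 2^r ≤ 4·c²/ε²`. -/
theorem joint_sensing_inference_sample_complexity
    (M : ℕ) (I : Fin M → ℝ) (hI : Antitone I)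
    (c ε : ℝ) (hc : 0 < c) (hε : 0 < ε) (hεc : ε ≤ c)
    (w : ℕ → ℝ) (hw : ∀ r : ℕ, w r = c / Real.sqrt ((2 : ℝ) ^ r))
    (Ihat : ℕ → Fin M → ℝ)
    (hEst : ∀ (r : ℕ) (m : Fin M), |Ihat r m - I m| ≤ w r)
    (S : ℕ → Finset (Fin M))
    (hS : ∀ r : ℕ, S r = Finset.univ.filter (fun m : Fin M => ε + w r ≤ Ihat r m))
    (kstar : ℕ)
    (hk : kstar = (Finset.univ.filter (fun m : Fin M => ε ≤ I m)).card)
    (R : ℕ) (hR : R = ⌈2 * Real.logb 2 (c / ε)⌉₊) :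
    w R ≤ ε ∧
    ((Finset.univ.filter (fun m : Fin M => 3 * ε ≤ I m)) ⊆ S R ∧
      S R ⊆ (Finset.univ.filter (fun m : Fin M => ε ≤ I m)) ∧
      (S R).card ≤ kstar) ∧
    ∑ r ∈ Finset.range (R + 1), (2 : ℝ) ^ r ≤ 4 * c ^ 2 / ε ^ 2 := by
  have hce : (1:ℝ) ≤ c / ε := (one_le_div hε).mpr hεc
  set x := 2 * Real.logb 2 (c / ε) with hx
  have hx0 : 0 ≤ x := by
    have := Real.logb_nonneg (by norm_num : (1:ℝ) < 2) hce
    positivity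
  have hkey : (c / ε) ^ 2 = (2:ℝ) ^ x := by
    rw [hx, mul_comm, Real.rpow_mul (by norm_num : (0:ℝ) ≤ 2),
      Real.rpow_logb (by norm_num) (by norm_num) (by positivity),
      Real.rpow_two]
  -- (i)
  have hRx : x ≤ (R : ℝ) := by rw [hR]; exact Nat.le_ceil x
  have h2R : (c / ε) ^ 2 ≤ (2:ℝ) ^ R := by
    rw [hkey]
    calc (2:ℝ) ^ x ≤ (2:ℝ) ^ (R:ℝ) :=
          Real.rpow_le_rpow_of_exponent_le (by norm_num) hRx
      _ = (2:ℝ) ^ R := Real.rpow_natCast 2 R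
  have hwR : w R ≤ ε := by
    rw [hw]
    rw [div_le_iff₀ (Real.sqrt_pos.mpr (by positivity))]
    have : c / ε ≤ Real.sqrt ((2:ℝ) ^ R) := by
      calc c / ε = Real.sqrt ((c/ε)^2) := (Real.sqrt_sq (by positivity)).symm
        _ ≤ Real.sqrt ((2:ℝ)^R) := Real.sqrt_le_sqrt h2R
    calc c = (c / ε) * ε := by field_simp
      _ ≤ Real.sqrt ((2:ℝ)^R) * ε := by
          exact mul_le_mul_of_nonneg_right this hε.le
      _ = ε * Real.sqrt ((2:ℝ)^R) := mul_comm _ _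
  have hwpos : 0 ≤ w R := by rw [hw]; positivity
  refine ⟨hwR, ⟨?_, ?_, ?_⟩, ?_⟩
  · intro m hm
    simp only [Finset.mem_filter, Finset.mem_univ, true_and] at hm
    rw [hS]
    simp only [Finset.mem_filter, Finset.mem_univ, true_and]
    have h := abs_le.mp (hEst R m)
    nlinarith [h.1, h.2]
  · intro m hm
    rw [hS] at hm
    simp only [Finset.mem_filter, Finset.mem_univ, true_and] at hm ⊢
    have h := abs_le.mp (hEst R m)
    nlinarith [h.1, h.2]
  · rw [hk]
    apply Finset.card_le_card
    intro m hm
    rw [hS] at hm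
    simp only [Finset.mem_filter, Finset.mem_univ, true_and] at hm ⊢
    have h := abs_le.mp (hEst R m)
    nlinarith [h.1, h.2]
  · have hsum : ∑ r ∈ Finset.range (R + 1), (2 : ℝ) ^ r = 2 ^ (R+1) - 1 := by
      rw [geom_sum_eq (by norm_num)]; ring
    have hRlt : (R : ℝ) < x + 1 := by
      rw [hR]; exact Nat.ceil_lt_add_one hx0
    have h2 : (2:ℝ) ^ R ≤ 2 * (c / ε) ^ 2 := by
      rw [hkey]
      calc (2:ℝ) ^ R = (2:ℝ) ^ (R:ℝ) := (Real.rpow_natCast 2 R).symm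
        _ ≤ (2:ℝ) ^ (x + 1) :=
            Real.rpow_le_rpow_of_exponent_le (by norm_num) hRlt.le
        _ = (2:ℝ) ^ x * 2 := by
            rw [Real.rpow_add (by norm_num), Real.rpow_one]
        _ = 2 * (2:ℝ) ^ x := mul_comm _ _
    rw [hsum]
    have hcc : (c / ε)^2 = c^2 / ε^2 := div_pow c ε 2
    have hps : (2:ℝ)^(R+1) = 2 * 2^R := by ring
    have h4 : 4 * c ^ 2 / ε ^ 2 = 4 * (c^2 / ε^2) := by ring
    linarith [h2]
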